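/- Let P be a bi-stochastic operator on L²([0,1], λ). Then there exists a sequence (T_n) of invertible Lebesgue-measure-preserving transformations of [0,1] whose Koopman operators converge to P in the weak operator topology: ⟨f ∘ T_n, g⟩ → ⟨P f, g⟩ for all f, g ∈ L²[0,1]. -/

import Mathlib

/-!
For `N ≥ 1` let `I_j = [j/N, (j+1)/N)`. Positivity of `P` and `P 𝟙 = P* 𝟙 = 𝟙` make
`m i j = ⟪P 𝟙_{I_i}, 𝟙_{I_j}⟫` a nonnegative matrix all of whose rows and columns sum to `1/N`.
Cut each `I_j` into consecutive intervals of lengths `m 0 j, m 1 j, …` and each `I_i` into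
consecutive intervals of lengths `m i 0, m i 1, …`. The interval exchange translating the `i`-th
piece of `I_j` onto the `j`-th piece of `I_i` is an invertible measure-preserving map `T_N` (its
inverse is the exchange built from the transposed matrix) with `λ (T_N⁻¹ I_i ∩ I_j) = m i j`, so
its Koopman operator and `P` define the same bilinear form on the span `V_N` of the `𝟙_{I_j}`.
Step functions approximate continuous ones, so the orthogonal projections onto `V_N` converge
strongly to the identity; as Koopman operators are contractions, `⟪f ∘ T_N, g⟫ → ⟪P f, g⟫`.
-/

open MeasureTheory Filter Topology
open scoped RealInnerProductSpace

/-- Lebesgue measure on `[0,1]`. -/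
noncomputable abbrev μ01 : Measure ℝ := volume.restrict (Set.Icc (0 : ℝ) 1)

/-- The indicator function of the dyadic interval `[j/2ⁿ, (j+1)/2ⁿ]` as an element of
`L²([0,1])`. -/
noncomputable def dyadInd (n : ℕ) (j : Fin (2 ^ n)) : Lp ℝ 2 μ01 :=
  indicatorConstLp 2 measurableSet_Icc
    (by
      refine ne_of_lt (lt_of_le_of_lt (Measure.restrict_apply_le _ _) ?_)
      rw [Real.volume_Icc]; exact ENNReal.ofReal_lt_top)
    (1 : ℝ) (s := Set.Icc ((j : ℝ) / 2 ^ n) (((j : ℝ) + 1) / 2 ^ n))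

/-- The constant function `𝟙` on `[0,1]` as an element of `L²([0,1])`. -/
noncomputable def oneL2 : Lp ℝ 2 μ01 :=
  indicatorConstLp 2 measurableSet_Icc
    (by
      refine ne_of_lt (lt_of_le_of_lt (Measure.restrict_apply_le _ _) ?_)
      rw [Real.volume_Icc]; exact ENNReal.ofReal_lt_top)
    (1 : ℝ) (s := Set.Icc (0 : ℝ) 1)

open Set Function
open scoped BoundedContinuousFunction

instance : IsProbabilityMeasure μ01 := ⟨by simp [Real.volume_Icc]⟩

theorem μ01_eq_restrict_Ico : μ01 = volume.restrict (Ico 0 1) :=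
  Measure.restrict_congr_set Ico_ae_eq_Icc.symm

theorem ae_mem_Ico_μ01 : ∀ᵐ x ∂μ01, x ∈ Ico (0 : ℝ) 1 :=
  μ01_eq_restrict_Ico ▸ ae_restrict_mem measurableSet_Ico

section WeakLimit

variable {E : Type*} [NormedAddCommGroup E] [InnerProductSpace ℝ E]

theorem inner_apply_eq_of_mem_span {ι : Type*} {e : ι → E} {A B : E →L[ℝ] E}
    (h : ∀ i j, ⟪A (e i), e j⟫ = ⟪B (e i), e j⟫) {u v : E}
    (hu : u ∈ Submodule.span ℝ (range e)) (hv : v ∈ Submodule.span ℝ (range e)) :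
    ⟪A u, v⟫ = ⟪B u, v⟫ := by
  have hgen : ∀ j, ⟪A u, e j⟫ = ⟪B u, e j⟫ := fun j => by
    induction hu using Submodule.span_induction with
    | mem x hx => obtain ⟨i, rfl⟩ := hx; exact h i j
    | zero => simp
    | add x y _ _ hx hy => simp only [map_add, inner_add_left, hx, hy]
    | smul c x _ hx => simp only [map_smul, real_inner_smul_left, hx]
  induction hv using Submodule.span_induction with
  | mem x hx => obtain ⟨j, rfl⟩ := hx; exact hgen j
  | zero => simp
  | add x y _ _ hx hy => simp only [inner_add_right, hx, hy]
  | smul c x _ hx => simp only [real_inner_smul_right, hx]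

theorem Submodule.tendsto_starProjection_of_eventually_exists {ι : Type*} {l : Filter ι}
    {U : ι → Submodule ℝ E} [∀ n, (U n).HasOrthogonalProjection] {x : E}
    (hx : ∀ ε > 0, ∀ᶠ n in l, ∃ u ∈ U n, ‖x - u‖ < ε) :
    Tendsto (fun n => (U n).starProjection x) l (𝓝 x) := by
  refine Metric.tendsto_nhds.2 fun ε hε => (hx ε hε).mono fun n ⟨u, hu, hxu⟩ => ?_
  rw [dist_eq_norm, norm_sub_rev, starProjection_minimal]
  exact (ciInf_le ⟨0, forall_mem_range.2 fun _ => norm_nonneg _⟩ ⟨u, hu⟩).trans_lt hxu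

theorem tendsto_inner_apply_of_inner_eq {ι : Type*} {l : Filter ι} {K : ι → E →L[ℝ] E}
    {P : E →L[ℝ] E} {C : ℝ} (hK : ∀ n, ‖K n‖ ≤ C) {u v : ι → E} {f g : E}
    (hu : Tendsto u l (𝓝 f)) (hv : Tendsto v l (𝓝 g))
    (huv : ∀ n, ⟪K n (u n), v n⟫ = ⟪P (u n), v n⟫) :
    Tendsto (fun n => ⟪K n f, g⟫) l (𝓝 ⟪P f, g⟫) := by
  have hbound : ∀ n, ‖⟪K n f, g⟫ - ⟪K n (u n), v n⟫‖
      ≤ C * ‖f - u n‖ * ‖g‖ + C * ‖u n‖ * ‖g - v n‖ := fun n => by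
    have hsplit : ⟪K n f, g⟫ - ⟪K n (u n), v n⟫
        = ⟪K n (f - u n), g⟫ + ⟪K n (u n), g - v n⟫ := by
      rw [map_sub, inner_sub_left, inner_sub_right]; ring
    rw [hsplit]
    refine (norm_add_le _ _).trans (add_le_add ?_ ?_) <;>
      refine (norm_inner_le_norm _ _).trans (mul_le_mul_of_nonneg_right ?_ (norm_nonneg _)) <;>
      exact (K n).le_of_opNorm_le (hK n) _
  have hf : Tendsto (fun n => ‖f - u n‖) l (𝓝 0) := by
    simpa using ((tendsto_const_nhds (x := f)).sub hu).norm
  have hg : Tendsto (fun n => ‖g - v n‖) l (𝓝 0) := by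
    simpa using ((tendsto_const_nhds (x := g)).sub hv).norm
  have hdiff : Tendsto (fun n => ⟪K n f, g⟫ - ⟪K n (u n), v n⟫) l (𝓝 0) :=
    squeeze_zero_norm hbound <| by
      simpa using ((hf.const_mul C).mul_const ‖g‖).add ((hu.norm.const_mul C).mul hg)
  have hP : Tendsto (fun n => ⟪P (u n), v n⟫) l (𝓝 ⟪P f, g⟫) :=
    ((P.continuous.tendsto f).comp hu).inner hv
  simpa [huv] using hdiff.add hP

end WeakLimit

theorem Monotone.iUnion_fin_Ico_eq {α : Type*} [LinearOrder α] {c : ℕ → α} (hc : Monotone c)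
    (N : ℕ) : ⋃ i : Fin N, Ico (c i) (c (i + 1)) = Ico (c 0) (c N) := by
  refine Subset.antisymm
    (iUnion_subset fun i => Ico_subset_Ico (hc (Nat.zero_le _)) (hc i.isLt)) fun x hx => ?_
  obtain ⟨i, hi, hx⟩ := mem_iUnion₂.1 (Ico_subset_biUnion_Ico N c hx)
  exact mem_iUnion.2 ⟨⟨i, Finset.mem_range.1 hi⟩, hx⟩

theorem Monotone.pairwise_disjoint_on_Ico_add_one {α : Type*} [Preorder α] {c : ℕ → α}
    (hc : Monotone c) : Pairwise (Disjoint on fun n => Ico (c n) (c (n + 1))) := by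
  simpa using hc.pairwise_disjoint_on_Ico_succ

section IntervalExchange

variable {ι : Type*} [Fintype ι] {a b ℓ : ι → ℝ}

noncomputable def intervalExchange (a b ℓ : ι → ℝ) (x : ℝ) : ℝ :=
  x + ∑ i, (Ico (a i) (a i + ℓ i)).indicator (fun _ => b i - a i) x

theorem intervalExchange_of_mem (hA : Pairwise (Disjoint on fun i => Ico (a i) (a i + ℓ i)))
    {i : ι} {x : ℝ} (hx : x ∈ Ico (a i) (a i + ℓ i)) :
    intervalExchange a b ℓ x = x + (b i - a i) := by
  rw [intervalExchange, Finset.sum_eq_single i (fun j _ hji => indicator_of_notMem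
    (disjoint_left.1 (hA hji.symm) hx) _) (by simp), indicator_of_mem hx]

theorem intervalExchange_of_notMem {x : ℝ} (hx : x ∉ ⋃ i, Ico (a i) (a i + ℓ i)) :
    intervalExchange a b ℓ x = x := by
  simp_all [intervalExchange]

theorem intervalExchange_mem (hA : Pairwise (Disjoint on fun i => Ico (a i) (a i + ℓ i)))
    {i : ι} {x : ℝ} (hx : x ∈ Ico (a i) (a i + ℓ i)) :
    intervalExchange a b ℓ x ∈ Ico (b i) (b i + ℓ i) := by
  rw [intervalExchange_of_mem hA hx]
  exact ⟨by linarith [hx.1], by linarith [hx.2]⟩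

theorem intervalExchange_comp_equiv {κ : Type*} [Fintype κ] (e : κ ≃ ι) :
    intervalExchange (a ∘ e) (b ∘ e) (ℓ ∘ e) = intervalExchange a b ℓ := by
  funext x
  simp only [intervalExchange, comp_apply, e.sum_comp fun i =>
    (Ico (a i) (a i + ℓ i)).indicator (fun _ => b i - a i) x]

theorem measurable_intervalExchange : Measurable (intervalExchange a b ℓ) :=
  measurable_id.add <| Finset.measurable_sum _ fun _ _ =>
    measurable_const.indicator measurableSet_Ico

theorem intervalExchange_leftInverse
    (hA : Pairwise (Disjoint on fun i => Ico (a i) (a i + ℓ i)))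
    (hB : Pairwise (Disjoint on fun i => Ico (b i) (b i + ℓ i)))
    (hAB : ⋃ i, Ico (a i) (a i + ℓ i) = ⋃ i, Ico (b i) (b i + ℓ i)) :
    LeftInverse (intervalExchange b a ℓ) (intervalExchange a b ℓ) := fun x => by
  by_cases hx : x ∈ ⋃ i, Ico (a i) (a i + ℓ i)
  · obtain ⟨i, hi⟩ := mem_iUnion.1 hx
    rw [intervalExchange_of_mem hB (intervalExchange_mem hA hi), intervalExchange_of_mem hA hi]
    ring
  · rw [intervalExchange_of_notMem hx, intervalExchange_of_notMem (hAB ▸ hx)]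

theorem measurePreserving_intervalExchange
    (hA : Pairwise (Disjoint on fun i => Ico (a i) (a i + ℓ i)))
    (hB : Pairwise (Disjoint on fun i => Ico (b i) (b i + ℓ i)))
    (hAB : ⋃ i, Ico (a i) (a i + ℓ i) = ⋃ i, Ico (b i) (b i + ℓ i)) :
    MeasurePreserving (intervalExchange a b ℓ)
      (volume.restrict (⋃ i, Ico (a i) (a i + ℓ i)))
      (volume.restrict (⋃ i, Ico (a i) (a i + ℓ i))) := by
  refine ⟨measurable_intervalExchange, Measure.ext fun t ht => ?_⟩
  have hpre := measurable_intervalExchange (a := a) (b := b) (ℓ := ℓ) ht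
  have hblock : ∀ i, intervalExchange a b ℓ ⁻¹' t ∩ Ico (a i) (a i + ℓ i)
      = (· + (b i - a i)) ⁻¹' (t ∩ Ico (b i) (b i + ℓ i)) := fun i => by
    ext x
    simp only [mem_inter_iff, mem_preimage]
    constructor
    · rintro ⟨hxt, hx⟩
      exact ⟨intervalExchange_of_mem hA hx ▸ hxt, intervalExchange_of_mem hA hx ▸
        intervalExchange_mem hA hx⟩
    · rintro ⟨hxt, hxb⟩
      have hx : x ∈ Ico (a i) (a i + ℓ i) := ⟨by linarith [hxb.1], by linarith [hxb.2]⟩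
      exact ⟨(intervalExchange_of_mem hA hx).symm ▸ hxt, hx⟩
  rw [Measure.map_apply measurable_intervalExchange ht, Measure.restrict_apply hpre,
    Measure.restrict_apply ht, inter_iUnion, measure_iUnion
      (hA.mono fun _ _ h => h.mono inter_subset_right inter_subset_right)
      fun _ => hpre.inter measurableSet_Ico]
  conv_rhs => rw [hAB, inter_iUnion, measure_iUnion
      (hB.mono fun _ _ h => h.mono inter_subset_right inter_subset_right)
      fun _ => ht.inter measurableSet_Ico]
  simp only [hblock, measure_preimage_add_right]

end IntervalExchange

section Cells

variable (N : ℕ) (w : ℕ → ℕ → ℝ)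

def cell (j : ℕ) : Set ℝ := Ico ((j : ℝ) / N) ((j + 1) / N)

noncomputable def cellPieceStart (i j : ℕ) : ℝ := j / N + ∑ k ∈ Finset.range i, w k j

noncomputable def cellPiece (i j : ℕ) : Set ℝ :=
  Ico (cellPieceStart N w i j) (cellPieceStart N w i j + w i j)

variable {N w}

theorem monotone_div_natCast : Monotone fun j : ℕ => (j : ℝ) / N :=
  fun _ _ h => div_le_div_of_nonneg_right (by exact_mod_cast h) N.cast_nonneg

theorem pairwise_disjoint_cell : Pairwise (Disjoint on cell N) := fun i j h => by
  simpa only [onFun, cell, Nat.cast_add, Nat.cast_one] using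
    (monotone_div_natCast (N := N)).pairwise_disjoint_on_Ico_add_one h

theorem iUnion_cell (hN : 0 < N) : ⋃ j : Fin N, cell N j = Ico 0 1 := by
  have h := (monotone_div_natCast (N := N)).iUnion_fin_Ico_eq N
  simp only [Nat.cast_add, Nat.cast_one, Nat.cast_zero, zero_div] at h
  rw [← div_self (Nat.cast_ne_zero.2 hN.ne' : (N : ℝ) ≠ 0), ← h]
  rfl

theorem measurableSet_cell (j : ℕ) : MeasurableSet (cell N j) := measurableSet_Ico

theorem eq_of_mem_cell {x : ℝ} {j j' : ℕ} (hj : x ∈ cell N j) (hj' : x ∈ cell N j') :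
    j = j' :=
  by_contra fun h => disjoint_left.1 (pairwise_disjoint_cell h) hj hj'

theorem cell_subset_Ico (hN : 0 < N) (j : Fin N) : cell N j ⊆ Ico 0 1 :=
  iUnion_cell hN ▸ subset_iUnion (fun j : Fin N => cell N j) j

theorem cellPiece_eq_Ico (i j : ℕ) :
    cellPiece N w i j = Ico (cellPieceStart N w i j) (cellPieceStart N w (i + 1) j) := by
  rw [cellPiece, cellPieceStart, cellPieceStart, Finset.sum_range_succ, add_assoc]

theorem monotone_cellPieceStart (hw : ∀ i j, 0 ≤ w i j) (j : ℕ) :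
    Monotone fun i => cellPieceStart N w i j := fun _ _ h =>
  add_le_add le_rfl (Finset.sum_le_sum_of_subset_of_nonneg (Finset.range_subset_range.2 h)
    fun _ _ _ => hw _ _)

theorem iUnion_cellPiece (hw : ∀ i j, 0 ≤ w i j) {j : ℕ} (hj : ∑ i : Fin N, w i j = 1 / N) :
    ⋃ i : Fin N, cellPiece N w i j = cell N j := by
  simp_rw [cellPiece_eq_Ico, (monotone_cellPieceStart hw j).iUnion_fin_Ico_eq, cellPieceStart,
    ← Fin.sum_univ_eq_sum_range (w · j), hj, cell]
  simp [add_div]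

theorem cellPiece_subset_cell (hw : ∀ i j, 0 ≤ w i j) {j : ℕ}
    (hj : ∑ i : Fin N, w i j = 1 / N) (i : Fin N) : cellPiece N w i j ⊆ cell N j :=
  iUnion_cellPiece hw hj ▸ subset_iUnion (fun i : Fin N => cellPiece N w i j) i

theorem pairwise_disjoint_cellPiece (hw : ∀ i j, 0 ≤ w i j)
    (hcol : ∀ j : Fin N, ∑ i : Fin N, w i j = 1 / N) :
    Pairwise (Disjoint on fun p : Fin N × Fin N => cellPiece N w p.1 p.2) := by
  rintro ⟨i, j⟩ ⟨i', j'⟩ hne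
  by_cases hj : j = j'
  · subst hj
    have hi : (i : ℕ) ≠ i' := fun h => hne (by rw [Fin.ext h])
    simpa only [onFun, cellPiece_eq_Ico] using
      (monotone_cellPieceStart hw j).pairwise_disjoint_on_Ico_add_one hi
  · exact (pairwise_disjoint_cell (Fin.val_ne_of_ne hj)).mono
      (cellPiece_subset_cell hw (hcol j) i) (cellPiece_subset_cell hw (hcol j') i')

theorem iUnion_cellPiece_prod (hN : 0 < N) (hw : ∀ i j, 0 ≤ w i j)
    (hcol : ∀ j : Fin N, ∑ i : Fin N, w i j = 1 / N) :
    ⋃ p : Fin N × Fin N, cellPiece N w p.1 p.2 = Ico 0 1 := by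
  rw [iUnion_prod', iUnion_comm]
  simp_rw [iUnion_cellPiece hw (hcol _)]
  exact iUnion_cell hN

end Cells

section PieceExchange

variable {N : ℕ} {w : ℕ → ℕ → ℝ}

theorem pairwise_disjoint_cellPiece_swap (hw : ∀ i j, 0 ≤ w i j)
    (hrow : ∀ i : Fin N, ∑ j : Fin N, w i j = 1 / N) :
    Pairwise (Disjoint on fun p : Fin N × Fin N => cellPiece N (swap w) p.2 p.1) :=
  fun _ _ h => pairwise_disjoint_cellPiece (w := swap w) (fun i j => hw j i) hrow
    (Prod.swap_injective.ne h)

theorem iUnion_cellPiece_swap (hN : 0 < N) (hw : ∀ i j, 0 ≤ w i j)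
    (hrow : ∀ i : Fin N, ∑ j : Fin N, w i j = 1 / N) :
    ⋃ p : Fin N × Fin N, cellPiece N (swap w) p.2 p.1 = Ico 0 1 :=
  (Prod.swap_surjective.iUnion_comp fun p : Fin N × Fin N => cellPiece N (swap w) p.1 p.2).trans
    (iUnion_cellPiece_prod hN (fun i j => hw j i) hrow)

/-- The interval exchange translating `cellPiece N w i j ⊆ cell N j` onto
`cellPiece N (swap w) j i ⊆ cell N i`. -/
noncomputable def pieceExchange (N : ℕ) (w : ℕ → ℕ → ℝ) : ℝ → ℝ :=
  intervalExchange (fun p : Fin N × Fin N => cellPieceStart N w p.1 p.2)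
    (fun p => cellPieceStart N (swap w) p.2 p.1) (fun p => w p.1 p.2)

theorem pieceExchange_mem (hw : ∀ i j, 0 ≤ w i j)
    (hcol : ∀ j : Fin N, ∑ i : Fin N, w i j = 1 / N) {i j : Fin N} {x : ℝ}
    (hx : x ∈ cellPiece N w i j) : pieceExchange N w x ∈ cellPiece N (swap w) j i :=
  intervalExchange_mem (a := fun p : Fin N × Fin N => cellPieceStart N w p.1 p.2)
    (b := fun p => cellPieceStart N (swap w) p.2 p.1) (ℓ := fun p => w p.1 p.2)
    (pairwise_disjoint_cellPiece hw hcol) (i := (i, j)) hx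

variable (hN : 0 < N) (hw : ∀ i j, 0 ≤ w i j)
  (hcol : ∀ j : Fin N, ∑ i : Fin N, w i j = 1 / N) (hrow : ∀ i : Fin N, ∑ j : Fin N, w i j = 1 / N)
include hN hw hcol hrow

theorem preimage_pieceExchange_cell_inter_cell (i j : Fin N) :
    pieceExchange N w ⁻¹' cell N i ∩ cell N j = cellPiece N w i j := by
  have hmem : ∀ p : Fin N × Fin N, ∀ x ∈ cellPiece N w p.1 p.2,
      pieceExchange N w x ∈ cell N p.1 ∧ x ∈ cell N p.2 := fun p x hx =>
    ⟨cellPiece_subset_cell (fun i j => hw j i) (hrow p.1) p.2 (pieceExchange_mem hw hcol hx),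
      cellPiece_subset_cell hw (hcol p.2) p.1 hx⟩
  refine Subset.antisymm (fun x ⟨hxi, hxj⟩ => ?_) fun x hx => hmem (i, j) x hx
  obtain ⟨⟨i', j'⟩, hx⟩ := mem_iUnion.1 <|
    (iUnion_cellPiece_prod hN hw hcol).symm ▸ cell_subset_Ico hN j hxj
  obtain ⟨hxi', hxj'⟩ := hmem _ x hx
  rwa [Fin.ext (eq_of_mem_cell hxi hxi'), Fin.ext (eq_of_mem_cell hxj hxj')]

theorem measurePreserving_pieceExchange : MeasurePreserving (pieceExchange N w) μ01 μ01 := by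
  rw [μ01_eq_restrict_Ico, ← iUnion_cellPiece_prod hN hw hcol]
  exact measurePreserving_intervalExchange (pairwise_disjoint_cellPiece hw hcol)
    (pairwise_disjoint_cellPiece_swap hw hrow)
    ((iUnion_cellPiece_prod hN hw hcol).trans (iUnion_cellPiece_swap hN hw hrow).symm)

theorem leftInverse_pieceExchange_swap :
    LeftInverse (pieceExchange N (swap w)) (pieceExchange N w) := by
  rw [pieceExchange, ← intervalExchange_comp_equiv (Equiv.prodComm (Fin N) (Fin N))]
  exact intervalExchange_leftInverse (pairwise_disjoint_cellPiece hw hcol)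
    (pairwise_disjoint_cellPiece_swap hw hrow)
    ((iUnion_cellPiece_prod hN hw hcol).trans (iUnion_cellPiece_swap hN hw hrow).symm)

theorem measureReal_preimage_pieceExchange_cell_inter_cell (i j : Fin N) :
    μ01.real (pieceExchange N w ⁻¹' cell N i ∩ cell N j) = w i j := by
  rw [preimage_pieceExchange_cell_inter_cell hN hw hcol hrow i j, μ01_eq_restrict_Ico,
    measureReal_restrict_apply (t := cellPiece N w i j) measurableSet_Ico, inter_eq_left.2
      ((cellPiece_subset_cell hw (hcol j) i).trans (cell_subset_Ico hN j)), cellPiece,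
    Real.volume_real_Ico_of_le (le_add_of_nonneg_right (hw i j)), add_sub_cancel_left]

end PieceExchange

section CellIndicators

variable {N : ℕ}

noncomputable def cellInd (N j : ℕ) : Lp ℝ 2 μ01 :=
  indicatorConstLp 2 (measurableSet_cell (N := N) j) (measure_ne_top _ _) 1

theorem coeFn_cellInd (j : ℕ) : cellInd N j =ᵐ[μ01] (cell N j).indicator fun _ => 1 :=
  indicatorConstLp_coeFn

theorem sum_indicator_cell_of_mem {x : ℝ} {j : Fin N} (hx : x ∈ cell N j) (c : ℕ → ℝ) :
    ∑ i : Fin N, (cell N i).indicator (fun _ => c i) x = c j :=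
  (Finset.sum_eq_single j (fun _ _ hij => indicator_of_notMem
    (fun hi => hij (Fin.ext (eq_of_mem_cell hi hx))) _) (by simp)).trans (indicator_of_mem hx _)

theorem coeFn_sum_smul_cellInd (c : ℕ → ℝ) :
    ⇑(∑ j : Fin N, c j • cellInd N j)
      =ᵐ[μ01] fun x => ∑ j : Fin N, (cell N j).indicator (fun _ => c j) x := by
  have hcells : ∀ᵐ x ∂μ01, ∀ j : Fin N,
      (c j • cellInd N j) x = (cell N j).indicator (fun _ => c j) x :=
    ae_all_iff.2 fun j => (Lp.coeFn_smul _ _).trans <| (coeFn_cellInd (N := N) j).mono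
      fun x hx => by by_cases h : x ∈ cell N j <;> simp [hx, h]
  filter_upwards [Lp.coeFn_fun_finsetSum Finset.univ fun j : Fin N => c j • cellInd N j, hcells]
    with x hsum hx
  simp only [hsum, hx]

theorem sum_cellInd (hN : 0 < N) : ∑ j : Fin N, cellInd N j = oneL2 := by
  have hsum := coeFn_sum_smul_cellInd (N := N) fun _ => 1
  simp only [one_smul] at hsum
  have hone : ⇑oneL2 =ᵐ[μ01] (Icc 0 1).indicator fun _ => 1 := indicatorConstLp_coeFn
  refine Lp.ext ?_
  filter_upwards [hsum, hone, ae_mem_Ico_μ01] with x hsum hone hx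
  obtain ⟨j, hj⟩ := mem_iUnion.1 ((iUnion_cell hN).symm ▸ hx)
  rw [hsum, hone, indicator_of_mem (Ico_subset_Icc_self hx)]
  exact sum_indicator_cell_of_mem hj fun _ => 1

theorem inner_oneL2_cellInd (hN : 0 < N) (j : Fin N) : ⟪oneL2, cellInd N j⟫ = 1 / N := by
  have hj : (j : ℝ) / N ≤ (j + 1) / N := by gcongr; linarith
  rw [oneL2, cellInd, L2.real_inner_indicatorConstLp_one_indicatorConstLp_one,
    inter_eq_right.2 ((cell_subset_Ico hN j).trans Ico_subset_Icc_self),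
    measureReal_restrict_apply (t := cell N j) measurableSet_Ico,
    inter_eq_left.2 ((cell_subset_Ico hN j).trans Ico_subset_Icc_self), cell,
    Real.volume_real_Ico_of_le hj]
  ring

theorem inner_compMeasurePreserving_cellInd {T : ℝ → ℝ} (hT : MeasurePreserving T μ01 μ01)
    (i j : ℕ) :
    ⟪Lp.compMeasurePreserving T hT (cellInd N i), cellInd N j⟫
      = μ01.real (T ⁻¹' cell N i ∩ cell N j) :=
  L2.real_inner_indicatorConstLp_one_indicatorConstLp_one
    ((measurableSet_cell i).preimage hT.measurable) (measurableSet_cell j)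
    (measure_ne_top _ _) (measure_ne_top _ _)

end CellIndicators

section Bistochastic

variable {N : ℕ} {P : Lp ℝ 2 μ01 →L[ℝ] Lp ℝ 2 μ01}

theorem inner_apply_cellInd_nonneg (hpos : ∀ f : Lp ℝ 2 μ01, 0 ≤ f → 0 ≤ P f) (i j : ℕ) :
    0 ≤ ⟪P (cellInd N i), cellInd N j⟫ := by
  have hi : 0 ≤ cellInd N i := (Lp.coeFn_nonneg _).1 <|
    (coeFn_cellInd i).mono fun x hx => hx ▸ indicator_nonneg (fun _ _ => zero_le_one) x
  rw [real_inner_comm, cellInd, L2.inner_indicatorConstLp_one]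
  exact integral_nonneg_of_ae <| ae_restrict_of_ae <| (Lp.coeFn_nonneg _).2 (hpos _ hi)

theorem sum_inner_apply_cellInd_left (hN : 0 < N) (h1 : P oneL2 = oneL2) (j : Fin N) :
    ∑ i : Fin N, ⟪P (cellInd N i), cellInd N j⟫ = 1 / N := by
  rw [← sum_inner, ← map_sum, sum_cellInd hN, h1, inner_oneL2_cellInd hN]

theorem sum_inner_apply_cellInd_right (hN : 0 < N)
    (h1' : ContinuousLinearMap.adjoint P oneL2 = oneL2) (i : Fin N) :
    ∑ j : Fin N, ⟪P (cellInd N i), cellInd N j⟫ = 1 / N := by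
  rw [← inner_sum, sum_cellInd hN, ← ContinuousLinearMap.adjoint_inner_right, h1',
    real_inner_comm, inner_oneL2_cellInd hN]

theorem exists_inner_compMeasurePreserving_cellInd_eq
    (hpos : ∀ f : Lp ℝ 2 μ01, 0 ≤ f → 0 ≤ P f) (h1 : P oneL2 = oneL2)
    (h1' : ContinuousLinearMap.adjoint P oneL2 = oneL2) (hN : 0 < N) :
    ∃ (T S : ℝ → ℝ) (hT : MeasurePreserving T μ01 μ01), MeasurePreserving S μ01 μ01 ∧
      LeftInverse S T ∧ Function.RightInverse S T ∧ ∀ i j : Fin N,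
        ⟪Lp.compMeasurePreserving T hT (cellInd N i), cellInd N j⟫
          = ⟪P (cellInd N i), cellInd N j⟫ := by
  set w : ℕ → ℕ → ℝ := fun i j => ⟪P (cellInd N i), cellInd N j⟫
  have hw : ∀ i j, 0 ≤ w i j := inner_apply_cellInd_nonneg hpos
  have hcol := sum_inner_apply_cellInd_left hN h1
  have hrow := sum_inner_apply_cellInd_right hN h1'
  refine ⟨pieceExchange N w, pieceExchange N (swap w),
    measurePreserving_pieceExchange hN hw hcol hrow,
    measurePreserving_pieceExchange hN (fun i j => hw j i) hrow hcol,
    leftInverse_pieceExchange_swap hN hw hcol hrow,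
    leftInverse_pieceExchange_swap hN (fun i j => hw j i) hrow hcol, fun i j => ?_⟩
  rw [inner_compMeasurePreserving_cellInd,
    measureReal_preimage_pieceExchange_cell_inter_cell hN hw hcol hrow]

end Bistochastic

section Approximation

theorem eventually_norm_toLp_sub_sum_smul_cellInd_le (h : ℝ →ᵇ ℝ) {ε : ℝ} (hε : 0 < ε) :
    ∀ᶠ N in atTop, ‖BoundedContinuousFunction.toLp 2 μ01 ℝ h
      - ∑ j : Fin N, h (j / N) • cellInd N j‖ ≤ ε := by
  obtain ⟨δ, hδ, hδh⟩ := Metric.uniformContinuousOn_iff.1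
    ((isCompact_Icc (a := (0 : ℝ)) (b := 1)).uniformContinuousOn_of_continuous
      h.continuous.continuousOn) ε hε
  filter_upwards [eventually_gt_atTop 0,
    tendsto_one_div_atTop_nhds_zero_nat.eventually (gt_mem_nhds hδ)] with N hN hNδ
  refine (Lp.norm_le_of_ae_bound hε.le ?_).trans (by simp [measureUnivNNReal])
  filter_upwards [Lp.coeFn_sub (BoundedContinuousFunction.toLp 2 μ01 ℝ h) _,
    BoundedContinuousFunction.coeFn_toLp 2 μ01 ℝ h, coeFn_sum_smul_cellInd fun j => h (j / N),
    ae_mem_Ico_μ01] with x hsub hh hsum hx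
  obtain ⟨j, hj⟩ := mem_iUnion.1 ((iUnion_cell hN).symm ▸ hx)
  rw [hsub, Pi.sub_apply, hh, hsum, sum_indicator_cell_of_mem hj fun j => h (j / N),
    ← dist_eq_norm]
  have hj' := hj
  rw [cell, mem_Ico] at hj'
  refine (hδh x (Ico_subset_Icc_self hx) _ (Ico_subset_Icc_self
    (cell_subset_Ico hN j (left_mem_Ico.2 (hj'.1.trans_lt hj'.2)))) ?_).le
  rw [Real.dist_eq, abs_of_nonneg (sub_nonneg.2 hj'.1)]
  calc x - j / N < (j + 1) / N - j / N := by linarith [hj'.2]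
    _ = 1 / N := by ring
    _ < δ := hNδ

theorem eventually_exists_mem_span_cellInd_norm_sub_lt (f : Lp ℝ 2 μ01) {ε : ℝ}
    (hε : 0 < ε) :
    ∀ᶠ N in atTop, ∃ u ∈ Submodule.span ℝ (range fun j : Fin N => cellInd N j),
      ‖f - u‖ < ε := by
  obtain ⟨h, hfh⟩ := (BoundedContinuousFunction.toLp_denseRange ℝ μ01 (p := 2) ℝ
    ENNReal.ofNat_ne_top).exists_dist_lt f (half_pos hε)
  filter_upwards [eventually_norm_toLp_sub_sum_smul_cellInd_le h (half_pos hε)] with N hN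
  refine ⟨∑ j : Fin N, h (j / N) • cellInd N j,
    Submodule.sum_mem _ fun j _ => Submodule.smul_mem _ _ (Submodule.subset_span ⟨j, rfl⟩), ?_⟩
  calc _ ≤ _ := norm_sub_le_norm_sub_add_norm_sub f (BoundedContinuousFunction.toLp 2 μ01 ℝ h) _
    _ < ε / 2 + ε / 2 := add_lt_add_of_lt_of_le (by rwa [← dist_eq_norm]) hN
    _ = ε := add_halves ε

end Approximation

/-- Every bi-stochastic operator on `L²([0,1])` is a weak operator limit of Koopman
operators of invertible Lebesgue-measure-preserving transformations of `[0,1]`. -/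
theorem bistochastic_weak_limit_of_invertible_mpts (P : Lp ℝ 2 μ01 →L[ℝ] Lp ℝ 2 μ01)
    (hpos : ∀ f : Lp ℝ 2 μ01, 0 ≤ f → 0 ≤ P f)
    (h1 : P oneL2 = oneL2)
    (h1' : ContinuousLinearMap.adjoint P oneL2 = oneL2) :
    ∃ (T S : ℕ → ℝ → ℝ) (K : ℕ → (Lp ℝ 2 μ01 →L[ℝ] Lp ℝ 2 μ01)),
      (∀ n, MeasurePreserving (T n) μ01 μ01) ∧
      (∀ n, MeasurePreserving (S n) μ01 μ01) ∧
      (∀ n, ∀ᵐ x ∂μ01, S n (T n x) = x) ∧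
      (∀ n, ∀ᵐ x ∂μ01, T n (S n x) = x) ∧
      (∀ n (f : Lp ℝ 2 μ01), (K n f : ℝ → ℝ) =ᵐ[μ01] (f : ℝ → ℝ) ∘ T n) ∧
      (∀ f g : Lp ℝ 2 μ01,
        Tendsto (fun n => ⟪K n f, g⟫) atTop (𝓝 ⟪P f, g⟫)) := by
  choose T S hT hS hST hTS hK using fun n : ℕ =>
    exists_inner_compMeasurePreserving_cellInd_eq hpos h1 h1' n.add_one_pos
  refine ⟨T, S, fun n => (Lp.compMeasurePreservingₗᵢ ℝ (T n) (hT n)).toContinuousLinearMap,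
    hT, hS, fun n => ae_of_all _ (hST n), fun n => ae_of_all _ (hTS n),
    fun n f => Lp.coeFn_compMeasurePreserving f (hT n), fun f g => ?_⟩
  let V n := Submodule.span ℝ (range fun j : Fin (n + 1) => cellInd (n + 1) j)
  have (n : ℕ) : FiniteDimensional ℝ (V n) := FiniteDimensional.span_of_finite ℝ (finite_range _)
  have hV : ∀ f, Tendsto (fun n => (V n).starProjection f) atTop (𝓝 f) := fun f =>
    Submodule.tendsto_starProjection_of_eventually_exists fun ε hε =>
      (tendsto_add_atTop_nat 1).eventually (eventually_exists_mem_span_cellInd_norm_sub_lt f hε)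
  exact tendsto_inner_apply_of_inner_eq (fun n => LinearIsometry.norm_toContinuousLinearMap_le _)
    (hV f) (hV g) fun n => inner_apply_eq_of_mem_span (hK n)
      (Submodule.starProjection_apply_mem _ _) (Submodule.starProjection_apply_mem _ _)
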